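/- Let D = (V, A, ψ) be a multidigraph, let s, t ∈ V, and let k ∈ ℕ. Let P and Q be two nonempty subsets of V with V = P ⊔ Q. Then |{B ∈ U_k : T(B) = Q}| = Σ_{m ∈ ℕ} C(|A(Q,P)|, m) · |X_{k−m}^{P,Q}|, where C(n, m) denotes the binomial coefficient. -/

import Mathlib

/-!
A multidigraph is given by two finite types `V` (vertices) and `A` (arcs)
together with a map `ψ : A → V × V` sending each arc to its (source, target) pair.
For a subset `B ⊆ A`, the induced subdigraph `D⟨B⟩` has vertex set `V` and arc set `B`.
-/

/-- There is an arc of `B` from `v` to `w` in the subdigraph `D⟨B⟩`. -/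
def ArcStep {V A : Type*} (ψ : A → V × V) (B : Set A) (v w : V) : Prop :=
  ∃ a ∈ B, ψ a = (v, w)

/-- `v` can `B`-reach `w`: the subdigraph `D⟨B⟩` has a walk from `v` to `w`. -/
def CanReach {V A : Type*} (ψ : A → V × V) (B : Set A) (v w : V) : Prop :=
  Relation.ReflTransGen (ArcStep ψ B) v w

/-- `B ⊆ A` is acyclic: the subdigraph `D⟨B⟩` has no directed cycles
(equivalently, no closed walk of positive length). -/
def IsAcyclic {V A : Type*} (ψ : A → V × V) (B : Set A) : Prop :=
  ∀ v : V, ¬ Relation.TransGen (ArcStep ψ B) v v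

/-- `B` is an `s`-convergence: `B` is acyclic and `s` is a to-root of `D⟨B⟩`,
i.e. every vertex can `B`-reach `s`. -/
def IsConvergence {V A : Type*} (ψ : A → V × V) (B : Set A) (s : V) : Prop :=
  IsAcyclic ψ B ∧ ∀ v : V, CanReach ψ B v s

/-- `γ_k(s)`: the number of `s`-convergences of size `k`. -/
noncomputable def gammaCount {V A : Type*} (ψ : A → V × V) (k : ℕ) (s : V) : ℕ :=
  {B : Set A | IsConvergence ψ B s ∧ B.ncard = k}.ncard

/-- The attraction basin of `s` with respect to `B`: all vertices that can `B`-reach `s`. -/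
def basin {V A : Type*} (ψ : A → V × V) (B : Set A) (s : V) : Set V :=
  {v : V | CanReach ψ B v s}

/-- `A(P,Q)`: the set of arcs with source in `P` and target in `Q`. -/
def arcsFromTo {V A : Type*} (ψ : A → V × V) (P Q : Set V) : Set A :=
  {a : A | (ψ a).1 ∈ P ∧ (ψ a).2 ∈ Q}

/-- The outdegree of a vertex: the number of arcs with source `v`. -/
noncomputable def outDeg {V A : Type*} (ψ : A → V × V) (v : V) : ℕ :=
  {a : A | (ψ a).1 = v}.ncard

/-- The indegree of a vertex: the number of arcs with target `v`. -/
noncomputable def inDeg {V A : Type*} (ψ : A → V × V) (v : V) : ℕ :=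
  {a : A | (ψ a).2 = v}.ncard

/-- The digraph is balanced: each vertex has outdegree equal to indegree. -/
def IsBalanced {V A : Type*} (ψ : A → V × V) : Prop :=
  ∀ v : V, outDeg ψ v = inDeg ψ v

/-- `U_k`: the set of all acyclic `k`-element subsets `B` of `A` such that each
vertex can `B`-reach `s` or can `B`-reach `t`. -/
def Uset {V A : Type*} (ψ : A → V × V) (s t : V) (k : ℕ) : Set (Set A) :=
  {B : Set A | IsAcyclic ψ B ∧ B.ncard = k ∧ basin ψ B s ∪ basin ψ B t = Set.univ}

/-- `X_i^{P,Q}`: the set of all acyclic `i`-element subsets `B` of `A` with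
`S(B) = P` and `T(B) = Q` (empty for negative `i`). -/
def Xset {V A : Type*} (ψ : A → V × V) (s t : V) (P Q : Set V) (i : ℤ) : Set (Set A) :=
  {B : Set A | IsAcyclic ψ B ∧ (B.ncard : ℤ) = i ∧ basin ψ B s = P ∧ basin ψ B t = Q}

/-- `|X_i^{P,Q}|`. -/
noncomputable def Xcount {V A : Type*} (ψ : A → V × V) (s t : V) (P Q : Set V) (i : ℤ) : ℕ :=
  (Xset ψ s t P Q i).ncard

/-!
Write `F = A(Q,P)`. If `T(B) = Q`, no arc of `B` leads from `P` into `Q` (its source would reach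
`t`), so walks from `P` and walks into `Q` use no arc of `F`. Hence `B \ F` still has basins
`P` and `Q`, which identifies `B` with the pair `(B ∩ F, B \ F)`: an arbitrary `m`-subset of `F`
and an element of `X_{k-m}^{P,Q}`. Conversely, an element of `X^{P,Q}` contains no arc of `F`
(its source would reach `s`), and adding arcs of `F` to it creates neither a cycle nor a new walk
to `t`, since no arc leads back from `P` into `Q`.
-/

namespace Relation

variable {α : Type*} {r r' : α → α → Prop} {p : α → Prop} {a b : α}

theorem TransGen.mono_of_forward_closed (h : ∀ x y, r x y → p x → r' x y ∧ p y)
    (hab : TransGen r a b) (ha : p a) : TransGen r' a b ∧ p b := by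
  induction hab with
  | single hab => exact (h _ _ hab ha).imp .single id
  | tail _ hbc ih => exact (h _ _ hbc ih.2).imp ih.1.tail id

theorem ReflTransGen.mono_of_forward_closed (h : ∀ x y, r x y → p x → r' x y ∧ p y)
    (hab : ReflTransGen r a b) (ha : p a) : ReflTransGen r' a b ∧ p b := by
  induction hab with
  | refl => exact ⟨.refl, ha⟩
  | tail _ hbc ih => exact (h _ _ hbc ih.2).imp ih.1.tail id

theorem TransGen.mono_of_backward_closed (h : ∀ x y, r x y → p y → r' x y ∧ p x)
    (hab : TransGen r a b) (hb : p b) : TransGen r' a b ∧ p a :=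
  (TransGen.mono_of_forward_closed (r := Function.swap r) (r' := Function.swap r')
    (fun x y hxy => h y x hxy) (transGen_swap.2 hab) hb).imp transGen_swap.1 id

theorem ReflTransGen.mono_of_backward_closed (h : ∀ x y, r x y → p y → r' x y ∧ p x)
    (hab : ReflTransGen r a b) (hb : p b) : ReflTransGen r' a b ∧ p a :=
  (ReflTransGen.mono_of_forward_closed (r := Function.swap r) (r' := Function.swap r')
    (fun x y hxy => h y x hxy) (reflTransGen_swap.2 hab) hb).imp reflTransGen_swap.1 id

end Relation

theorem Set.ncard_setOf_inter_mem_and_sdiff_mem {α : Type*} (F : Set α) {𝓜 𝓒 : Set (Set α)}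
    (h𝓜 : ∀ M ∈ 𝓜, M ⊆ F) (h𝓒 : ∀ C ∈ 𝓒, Disjoint C F) :
    {B : Set α | B ∩ F ∈ 𝓜 ∧ B \ F ∈ 𝓒}.ncard = 𝓜.ncard * 𝓒.ncard := by
  have hinj : Function.Injective fun B : Set α => (B ∩ F, B \ F) := fun B₁ B₂ h => by
    rw [← inter_union_sdiff B₁ F, ← inter_union_sdiff B₂ F, (Prod.mk.inj h).1, (Prod.mk.inj h).2]
  have himage : (fun B => (B ∩ F, B \ F)) '' {B | B ∩ F ∈ 𝓜 ∧ B \ F ∈ 𝓒} = 𝓜 ×ˢ 𝓒 := by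
    ext ⟨M, C⟩
    constructor
    · rintro ⟨B, hB, he⟩
      obtain ⟨rfl, rfl⟩ := Prod.mk.inj he
      exact hB
    · rintro ⟨hM, hC⟩
      have hMF : (M ∪ C) ∩ F = M := by
        rw [union_inter_distrib_right, inter_eq_left.2 (h𝓜 M hM), (h𝓒 C hC).inter_eq, union_empty]
      have hCF : (M ∪ C) \ F = C := by
        rw [union_sdiff_distrib, sdiff_eq_empty.2 (h𝓜 M hM), (h𝓒 C hC).sdiff_eq_left, empty_union]
      exact ⟨M ∪ C, by simp only [mem_ofPred_eq, hMF, hCF]; exact ⟨hM, hC⟩, by simp only [hMF, hCF]⟩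
  rw [← ncard_prod, ← himage, ncard_image_of_injective _ hinj]

section Digraph

open Relation Set

variable {V A : Type*} {ψ : A → V × V} {B B' C M : Set A} {S P : Set V} {s t v w : V}

theorem ArcStep.mono (h : B ⊆ B') : ArcStep ψ B v w → ArcStep ψ B' v w :=
  fun ⟨a, ha, he⟩ => ⟨a, h ha, he⟩

theorem IsAcyclic.subset (hac : IsAcyclic ψ B') (h : B ⊆ B') : IsAcyclic ψ B :=
  fun v hv => hac v (TransGen.mono (fun _ _ => ArcStep.mono h) _ _ hv)

theorem basin_mono (h : B ⊆ B') (w : V) : basin ψ B w ⊆ basin ψ B' w :=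
  fun _ => ReflTransGen.mono (fun _ _ => ArcStep.mono h) _ _

theorem mem_basin_self (B : Set A) (w : V) : w ∈ basin ψ B w := ReflTransGen.refl

theorem fst_mem_basin {a : A} (ha : a ∈ B) (h : (ψ a).2 ∈ basin ψ B w) :
    (ψ a).1 ∈ basin ψ B w :=
  ReflTransGen.head ⟨a, ha, rfl⟩ h

theorem snd_mem_of_basin_eq_compl (hBt : basin ψ B t = Pᶜ) {a : A} (ha : a ∈ B)
    (h : (ψ a).1 ∈ P) : (ψ a).2 ∈ P := by
  have := mt (fst_mem_basin (ψ := ψ) (w := t) ha)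
  simp only [hBt, mem_compl_iff, not_not] at this
  exact this h

theorem arcStep_of_forward_closed (h : ∀ a ∈ B, (ψ a).1 ∈ S → a ∈ B' ∧ (ψ a).2 ∈ S) :
    ∀ x y, ArcStep ψ B x y → x ∈ S → ArcStep ψ B' x y ∧ y ∈ S := by
  rintro x y ⟨a, ha, he⟩ hx
  obtain ⟨ha', hy⟩ := h a ha (by rwa [he])
  exact ⟨⟨a, ha', he⟩, by rwa [he] at hy⟩

theorem arcStep_of_backward_closed (h : ∀ a ∈ B, (ψ a).2 ∈ S → a ∈ B' ∧ (ψ a).1 ∈ S) :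
    ∀ x y, ArcStep ψ B x y → y ∈ S → ArcStep ψ B' x y ∧ x ∈ S := by
  rintro x y ⟨a, ha, he⟩ hy
  obtain ⟨ha', hx⟩ := h a ha (by rwa [he])
  exact ⟨⟨a, ha', he⟩, by rwa [he] at hx⟩

theorem basin_sdiff_arcsFromTo_eq_compl (hBt : basin ψ B t = Pᶜ) :
    basin ψ (B \ arcsFromTo ψ Pᶜ P) t = Pᶜ := by
  refine (basin_mono sdiff_subset t).trans hBt.le |>.antisymm fun v hv => ?_
  have hclosed : ∀ a ∈ B, (ψ a).2 ∈ Pᶜ → a ∈ B \ arcsFromTo ψ Pᶜ P ∧ (ψ a).1 ∈ Pᶜ :=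
    fun a ha h2 => ⟨⟨ha, fun hF => h2 hF.2⟩, mt (snd_mem_of_basin_eq_compl hBt ha) h2⟩
  rw [← hBt] at hv
  exact (ReflTransGen.mono_of_backward_closed (arcStep_of_backward_closed hclosed) hv
    (hBt ▸ mem_basin_self B t)).1

theorem basin_sdiff_arcsFromTo_eq (hP : P.Nonempty) (hBt : basin ψ B t = Pᶜ)
    (hcover : basin ψ B s ∪ basin ψ B t = univ) :
    basin ψ (B \ arcsFromTo ψ Pᶜ P) s = P := by
  have hPs : P ⊆ basin ψ B s := fun v hv =>
    (hcover ▸ mem_univ v).resolve_right (by rw [hBt]; exact not_not.2 hv)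
  have hclosed : ∀ a ∈ B, (ψ a).1 ∈ P → a ∈ B \ arcsFromTo ψ Pᶜ P ∧ (ψ a).2 ∈ P :=
    fun a ha h1 => ⟨⟨ha, fun hF => hF.1 h1⟩, snd_mem_of_basin_eq_compl hBt ha h1⟩
  have hreach {v} (hv : v ∈ P) := ReflTransGen.mono_of_forward_closed
    (arcStep_of_forward_closed hclosed) (hPs hv) hv
  obtain ⟨p, hp⟩ := hP
  refine subset_antisymm (fun v hv => ?_) fun v hv => (hreach hv).1
  by_contra hvP
  have hcompl_closed : ∀ a ∈ B \ arcsFromTo ψ Pᶜ P, (ψ a).1 ∈ Pᶜ →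
      a ∈ B \ arcsFromTo ψ Pᶜ P ∧ (ψ a).2 ∈ Pᶜ :=
    fun a ha h1 => ⟨ha, fun h2 => ha.2 ⟨h1, h2⟩⟩
  exact (ReflTransGen.mono_of_forward_closed (arcStep_of_forward_closed hcompl_closed) hv hvP).2
    (hreach hp).2

theorem disjoint_arcsFromTo_of_basin_eq (hCs : basin ψ C s = P) :
    Disjoint C (arcsFromTo ψ Pᶜ P) :=
  disjoint_left.2 fun _ ha hF => hF.1 (hCs ▸ fst_mem_basin ha (hCs ▸ hF.2))

theorem mem_and_snd_mem_of_fst_mem (hM : M ⊆ arcsFromTo ψ Pᶜ P) (hCt : basin ψ C t = Pᶜ)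
    {a : A} (ha : a ∈ M ∪ C) (h1 : (ψ a).1 ∈ P) : a ∈ C ∧ (ψ a).2 ∈ P :=
  have haC : a ∈ C := ha.resolve_left fun haM => (hM haM).1 h1
  ⟨haC, snd_mem_of_basin_eq_compl hCt haC h1⟩

theorem mem_and_fst_mem_of_snd_mem (hM : M ⊆ arcsFromTo ψ Pᶜ P) (hCt : basin ψ C t = Pᶜ)
    {a : A} (ha : a ∈ M ∪ C) (h2 : (ψ a).2 ∈ Pᶜ) : a ∈ C ∧ (ψ a).1 ∈ Pᶜ :=
  have haC : a ∈ C := ha.resolve_left fun haM => h2 (hM haM).2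
  ⟨haC, mt (snd_mem_of_basin_eq_compl hCt haC) h2⟩

theorem IsAcyclic.union_of_subset_arcsFromTo (hC : IsAcyclic ψ C) (hM : M ⊆ arcsFromTo ψ Pᶜ P)
    (hCt : basin ψ C t = Pᶜ) : IsAcyclic ψ (M ∪ C) := by
  intro v hv
  by_cases hvP : v ∈ P
  · exact hC v (TransGen.mono_of_forward_closed
      (arcStep_of_forward_closed fun _ => mem_and_snd_mem_of_fst_mem hM hCt) hv hvP).1
  · exact hC v (TransGen.mono_of_backward_closed
      (arcStep_of_backward_closed fun _ => mem_and_fst_mem_of_snd_mem hM hCt) hv hvP).1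

theorem basin_union_of_subset_arcsFromTo (hM : M ⊆ arcsFromTo ψ Pᶜ P)
    (hCt : basin ψ C t = Pᶜ) : basin ψ (M ∪ C) t = Pᶜ := by
  refine subset_antisymm (fun v hv => ?_) (hCt ▸ basin_mono subset_union_right t)
  exact (ReflTransGen.mono_of_backward_closed
    (arcStep_of_backward_closed fun _ => mem_and_fst_mem_of_snd_mem hM hCt) hv
    (hCt ▸ mem_basin_self C t)).2

theorem Xcount_sub_eq_zero_of_lt {Q : Set V} {k m : ℕ} (h : k < m) :
    Xcount ψ s t P Q (k - m) = 0 := by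
  have hempty : Xset ψ s t P Q (k - m) = ∅ :=
    eq_empty_of_forall_notMem fun C hC => by have := hC.2.1; omega
  rw [Xcount, hempty, ncard_empty]

theorem mem_Uset_and_basin_eq_compl_iff [Finite A] (hP : P.Nonempty) {k : ℕ} :
    B ∈ Uset ψ s t k ∧ basin ψ B t = Pᶜ ↔
      B \ arcsFromTo ψ Pᶜ P ∈ Xset ψ s t P Pᶜ (k - (B ∩ arcsFromTo ψ Pᶜ P).ncard) := by
  have hcard := ncard_inter_add_ncard_sdiff_eq_ncard B (arcsFromTo ψ Pᶜ P) (toFinite B)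
  constructor
  · rintro ⟨⟨hac, rfl, hcover⟩, hBt⟩
    exact ⟨hac.subset sdiff_subset, by omega, basin_sdiff_arcsFromTo_eq hP hBt hcover,
      basin_sdiff_arcsFromTo_eq_compl hBt⟩
  · rintro ⟨hac, hk, hCs, hCt⟩
    have hM : B ∩ arcsFromTo ψ Pᶜ P ⊆ arcsFromTo ψ Pᶜ P := inter_subset_right
    have hB : B ∩ arcsFromTo ψ Pᶜ P ∪ B \ arcsFromTo ψ Pᶜ P = B := inter_union_sdiff _ _
    refine ⟨⟨hB ▸ hac.union_of_subset_arcsFromTo hM hCt, by omega, ?_⟩,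
      hB ▸ basin_union_of_subset_arcsFromTo hM hCt⟩
    refine eq_univ_of_forall fun v => ?_
    by_cases hv : v ∈ P
    · exact Or.inl (basin_mono sdiff_subset s (hCs ▸ hv))
    · exact Or.inr (basin_mono sdiff_subset t (hCt ▸ show v ∈ Pᶜ from hv))

theorem setOf_mem_Uset_and_basin_eq_compl_eq_biUnion [Finite A] (hP : P.Nonempty) (k : ℕ) :
    {B ∈ Uset ψ s t k | basin ψ B t = Pᶜ} = ⋃ m ∈ (Finset.range (k + 1) : Set ℕ),
      {B | B ∩ arcsFromTo ψ Pᶜ P ∈ {M ⊆ arcsFromTo ψ Pᶜ P | M.ncard = m} ∧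
        B \ arcsFromTo ψ Pᶜ P ∈ Xset ψ s t P Pᶜ (k - m)} := by
  ext B
  simp only [mem_Uset_and_basin_eq_compl_iff hP, mem_iUnion, Finset.coe_range, mem_Iio,
    mem_ofPred_eq, exists_prop]
  constructor
  · intro hX
    have hcard := hX.2.1
    exact ⟨_, by omega, ⟨inter_subset_right, rfl⟩, hX⟩
  · rintro ⟨m, -, ⟨-, rfl⟩, hX⟩
    exact hX

end Digraph

theorem count_T_eq_Q_as_sum_general {V A : Type*} [Fintype A]
    (ψ : A → V × V) (s t : V) (k : ℕ)
    (P Q : Set V) (hP : P.Nonempty)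
    (hunion : P ∪ Q = Set.univ) (hdisj : P ∩ Q = ∅) :
    {B ∈ Uset ψ s t k | basin ψ B t = Q}.ncard =
      ∑ᶠ m : ℕ,
        Nat.choose (arcsFromTo ψ Q P).ncard m * Xcount ψ s t P Q ((k : ℤ) - m) := by
  obtain rfl : Q = Pᶜ :=
    (IsCompl.compl_eq ⟨Set.disjoint_iff_inter_eq_empty.2 hdisj, codisjoint_iff.2 hunion⟩).symm
  set F := arcsFromTo ψ Pᶜ P
  have hsupport : (Function.support fun m : ℕ => F.ncard.choose m * Xcount ψ s t P Pᶜ (k - m))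
      ⊆ Finset.range (k + 1) := fun m hm => by
    by_contra hmk
    rw [Finset.mem_coe, Finset.mem_range, not_lt] at hmk
    exact hm (by dsimp only; rw [Xcount_sub_eq_zero_of_lt (by omega), mul_zero])
  rw [setOf_mem_Uset_and_basin_eq_compl_eq_biUnion hP, Set.Finite.ncard_biUnion (Set.toFinite _)
      (fun _ _ => Set.toFinite _)
      fun m _ m' _ hm => Set.disjoint_left.2 fun B hB hB' => hm (hB.1.2.symm.trans hB'.1.2),
    finsum_mem_coe_finset, finsum_eq_sum_of_support_subset _ hsupport]
  refine Finset.sum_congr rfl fun m _ => ?_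
  rw [Set.ncard_setOf_inter_mem_and_sdiff_mem F (fun _ hM => hM.1)
      (fun _ hC => disjoint_arcsFromTo_of_basin_eq hC.2.2.1),
    Set.ncard_powerset_ncard (Set.toFinite F), Xcount]

/-- For nonempty `P, Q` with `V = P ⊔ Q`,
`|{B ∈ U_k : T(B) = Q}| = Σ_{m ∈ ℕ} C(|A(Q,P)|, m) · |X_{k−m}^{P,Q}|`. -/
theorem count_T_eq_Q_as_sum {V A : Type*} [Fintype V] [Fintype A]
    (ψ : A → V × V) (s t : V) (k : ℕ)
    (P Q : Set V) (hP : P.Nonempty) (hQ : Q.Nonempty)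
    (hunion : P ∪ Q = Set.univ) (hdisj : P ∩ Q = ∅) :
    {B ∈ Uset ψ s t k | basin ψ B t = Q}.ncard =
      ∑ᶠ m : ℕ,
        Nat.choose (arcsFromTo ψ Q P).ncard m * Xcount ψ s t P Q ((k : ℤ) - m) :=
  count_T_eq_Q_as_sum_general ψ s t k P Q hP hunion hdisj
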